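/- Addition numerical dichotomy (odd case, freeness): let a' ≤ b' and suppose HS(D₀(C))(t) = (t^{a'+2} + t^{b'+2} + 2t^{m+1} - 2t^{m+2})/(1-t)³ with deg(C) = a'+b'+3. Then C is free if and only if a' = b' = m, in which case C has exponents (m+1, m+1), i.e., HS(D₀(C))(t) = 2t^{m+1}/(1-t)³. -/

import Mathlib

/-!
Clearing the common denominator `(1 - t)³`, freeness asks for an identity of polynomials
`t^{d₁} + t^{d₂} + 2t^{m+2} = t^{a'+2} + t^{b'+2} + 2t^{m+1}`. Comparing coefficients, the
coefficient `2` of `t^{m+1}` on the right can only be matched by `d₁ = d₂ = m + 1`, and then the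
term `2t^{m+2}` on the left can only be matched by `a' + 2 = b' + 2 = m + 2`.
-/

open Polynomial

theorem RatFunc.one_sub_X_ne_zero {K : Type*} [CommRing K] [IsDomain K] :
    (1 - RatFunc.X : RatFunc K) ≠ 0 := by
  rw [← RatFunc.algebraMap_X, ← map_one (algebraMap K[X] (RatFunc K)), ← map_sub, Ne,
    map_eq_zero_iff _ (RatFunc.algebraMap_injective K), sub_eq_zero]
  intro h
  simpa using congrArg (coeff · 0) h

theorem Polynomial.coeff_X_pow_add_X_pow_add_two_mul_X_pow {R : Type*} [Semiring R]
    (i j k n : ℕ) :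
    (X ^ i + X ^ j + 2 * X ^ k : R[X]).coeff n =
      (((if n = i then 1 else 0) + (if n = j then 1 else 0) + 2 * (if n = k then 1 else 0) : ℕ)
        : R) := by
  simp only [coeff_add, coeff_X_pow, coeff_ofNat_mul]
  push_cast [apply_ite (Nat.cast : ℕ → R)]
  rfl

theorem Polynomial.eq_of_X_pow_add_X_pow_add_two_mul_X_pow_succ_eq {R : Type*} [Semiring R]
    [CharZero R] {d₁ d₂ p q k : ℕ}
    (h : (X ^ d₁ + X ^ d₂ + 2 * X ^ (k + 1) : R[X]) = X ^ p + X ^ q + 2 * X ^ k) :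
    p = k + 1 ∧ q = k + 1 := by
  have hk := congrArg (coeff · k) h
  have hk₁ := congrArg (coeff · (k + 1)) h
  simp only [coeff_X_pow_add_X_pow_add_two_mul_X_pow, Nat.cast_inj] at hk hk₁
  split_ifs at hk hk₁ <;> omega

theorem RatFunc.eq_of_X_pow_add_X_pow_eq {K : Type*} [Field K] [CharZero K]
    {d₁ d₂ p q k : ℕ}
    (h : (X ^ p + X ^ q + 2 * X ^ k - 2 * X ^ (k + 1) : RatFunc K) = X ^ d₁ + X ^ d₂) :
    p = k + 1 ∧ q = k + 1 := by
  apply Polynomial.eq_of_X_pow_add_X_pow_add_two_mul_X_pow_succ_eq (d₁ := d₁) (d₂ := d₂) (R := K)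
  apply RatFunc.algebraMap_injective K
  simp only [map_add, map_mul, map_pow, map_ofNat, RatFunc.algebraMap_X]
  linear_combination -h

theorem addition_odd_free_general (a' b' m : ℕ)
    (HS : RatFunc ℚ) (Free : Prop)
    (hHS : HS = (RatFunc.X ^ (a' + 2) + RatFunc.X ^ (b' + 2)
        + 2 * RatFunc.X ^ (m + 1) - 2 * RatFunc.X ^ (m + 2)) / (1 - RatFunc.X) ^ 3)
    (hFree : Free ↔ ∃ d₁ d₂ : ℕ,
        HS = (RatFunc.X ^ d₁ + RatFunc.X ^ d₂) / (1 - RatFunc.X) ^ 3 ∧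
        d₁ + d₂ = a' + b' + 2) :
    (Free ↔ (a' = m ∧ b' = m)) ∧
    (Free → HS = 2 * RatFunc.X ^ (m + 1) / (1 - RatFunc.X) ^ 3) := by
  have hfree_iff : Free ↔ a' = m ∧ b' = m := by
    rw [hFree]
    constructor
    · rintro ⟨d₁, d₂, hd, -⟩
      rw [hHS, div_left_inj' (pow_ne_zero 3 RatFunc.one_sub_X_ne_zero)] at hd
      have := RatFunc.eq_of_X_pow_add_X_pow_eq hd
      omega
    · rintro ⟨ha, hb⟩
      exact ⟨m + 1, m + 1, by rw [hHS, ha, hb]; ring, by omega⟩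
  refine ⟨hfree_iff, fun hF => ?_⟩
  obtain ⟨ha, hb⟩ := hfree_iff.mp hF
  rw [hHS, ha, hb]
  ring

/-- addition numerical dichotomy (odd case, freeness).
Let `a' ≤ b'`, `deg C = a' + b' + 3`, and suppose
`HS(D₀(C))(t) = (t^{a'+2} + t^{b'+2} + 2t^{m+1} - 2t^{m+2})/(1-t)³`.
Freeness of `C` means the two minimal generator degrees `d₁, d₂` of `D₀(C)` satisfy
`HS = (t^{d₁} + t^{d₂})/(1-t)³` with `d₁ + d₂ = deg C - 1 = a' + b' + 2`.
Then `C` is free iff `a' = b' = m`, in which case `C` has exponents `(m+1, m+1)`,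
i.e. `HS(D₀(C))(t) = 2t^{m+1}/(1-t)³`. -/
theorem addition_odd_free (a' b' m : ℕ) (ha : 1 ≤ a') (hab : a' ≤ b')
    (HS : RatFunc ℚ) (Free : Prop)
    (hHS : HS = (RatFunc.X ^ (a' + 2) + RatFunc.X ^ (b' + 2)
        + 2 * RatFunc.X ^ (m + 1) - 2 * RatFunc.X ^ (m + 2)) / (1 - RatFunc.X) ^ 3)
    (hFree : Free ↔ ∃ d₁ d₂ : ℕ,
        HS = (RatFunc.X ^ d₁ + RatFunc.X ^ d₂) / (1 - RatFunc.X) ^ 3 ∧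
        d₁ + d₂ = a' + b' + 2) :
    (Free ↔ (a' = m ∧ b' = m)) ∧
    (Free → HS = 2 * RatFunc.X ^ (m + 1) / (1 - RatFunc.X) ^ 3) :=
  addition_odd_free_general a' b' m HS Free hHS hFree
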